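/- arXiv:2109.04626 — 3 statements merged into one kernel-verified Lean document; each statement's English description precedes it below -/
import Mathlib

section
/- For all natural numbers n ≥ 2 and k with 0 ≤ k ≤ n−2, the worst-case number of conditional independence tests of the PC algorithm satisfies the bound (n choose 2) · Σ_{i=0}^{k} (n−2 choose i) ≤ n(n−1)^{k+1}/2. -/
lemma choose_le_pow_aux : ∀ m j : ℕ, Nat.choose m j ≤ m ^ j := by
  intro m
  induction m with
  | zero => intro j; cases j <;> simp
  | succ m ih =>
    intro j
    cases j with
    | zero => simp
    | succ j =>
      rw [Nat.choose_succ_succ]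
      calc Nat.choose m j + Nat.choose m (j+1) ≤ m ^ j + m ^ (j+1) :=
            Nat.add_le_add (ih j) (ih (j+1))
        _ = m ^ j * (1 + m) := by ring
        _ ≤ (m+1) ^ j * (1 + m) := by
            exact Nat.mul_le_mul_right _ (Nat.pow_le_pow_left (Nat.le_succ m) j)
        _ = (m+1) ^ (j+1) := by ring

lemma sum_choose_le_pow (m k : ℕ) :
    ∑ i ∈ Finset.range (k + 1), m.choose i ≤ (m + 1) ^ k := by
  induction k with
  | zero => simp
  | succ k ih =>
    rw [Finset.sum_range_succ]
    calc (∑ i ∈ Finset.range (k+1), m.choose i) + m.choose (k+1)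
          ≤ (m+1)^k + m^(k+1) := Nat.add_le_add ih (choose_le_pow_aux m (k+1))
      _ ≤ (m+1)^k + m * (m+1)^k := by
          have : m ^ (k+1) ≤ m * (m+1)^k := by
            have := Nat.pow_le_pow_left (Nat.le_succ m) k
            calc m ^ (k+1) = m * m ^ k := by ring
              _ ≤ m * (m+1)^k := Nat.mul_le_mul_left m this
          omega
      _ = (m+1)^(k+1) := by ring

/-- Worst-case number of CI tests of the PC algorithm: for `n ≥ 2` nodes and
maximal degree `k ≤ n - 2`, `(n choose 2) · Σ_{i=0}^{k} (n−2 choose i) ≤ n(n−1)^{k+1}/2`. -/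
theorem pc_ci_test_count_bound (n k : ℕ) (hn : 2 ≤ n) (hk : k ≤ n - 2) :
    n.choose 2 * ∑ i ∈ Finset.range (k + 1), (n - 2).choose i ≤ n * (n - 1) ^ (k + 1) / 2 := by
  rw [Nat.le_div_iff_mul_le (by norm_num : 0 < 2)]
  have h2 : n.choose 2 * 2 = n * (n - 1) := by
    rw [Nat.choose_two_right]
    exact Nat.div_mul_cancel (Nat.even_mul_pred_self n).two_dvd
  have hS : ∑ i ∈ Finset.range (k + 1), (n - 2).choose i ≤ (n - 1) ^ k := by
    have := sum_choose_le_pow (n - 2) k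
    have h : n - 2 + 1 = n - 1 := by omega
    rwa [h] at this
  calc n.choose 2 * (∑ i ∈ Finset.range (k + 1), (n - 2).choose i) * 2
      = n * (n - 1) * (∑ i ∈ Finset.range (k + 1), (n - 2).choose i) := by
        rw [← h2]; ring
    _ ≤ n * (n - 1) * (n - 1) ^ k := Nat.mul_le_mul_left _ hS
    _ = n * (n - 1) ^ (k + 1) := by ring
end

section
/- Let γ, ρ, x be real numbers with 0 < γ ≤ 2, −1 ≤ ρ, x ≤ 1 and ρ + γ ≤ x. Then √((1−ρ²)(1−x²)) ≤ ((4−γ²)/(4+γ²)) · (1 − ρx), with equality attained at ρ = −γ/2, x = γ/2. -/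
/-- Pointwise estimate from the proof of the correlation concentration bound:
for `0 < γ ≤ 2`, `−1 ≤ ρ, x ≤ 1` and `ρ + γ ≤ x`,
`√((1−ρ²)(1−x²)) ≤ ((4−γ²)/(4+γ²))·(1−ρx)`, with equality at `ρ = −γ/2`, `x = γ/2`. -/
theorem hotelling_integrand_max (γ : ℝ) (hγ0 : 0 < γ) (hγ2 : γ ≤ 2) :
    (∀ ρ x : ℝ, -1 ≤ ρ → ρ ≤ 1 → -1 ≤ x → x ≤ 1 → ρ + γ ≤ x →
      Real.sqrt ((1 - ρ ^ 2) * (1 - x ^ 2)) ≤ (4 - γ ^ 2) / (4 + γ ^ 2) * (1 - ρ * x)) ∧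
    Real.sqrt ((1 - (-γ / 2) ^ 2) * (1 - (γ / 2) ^ 2)) =
      (4 - γ ^ 2) / (4 + γ ^ 2) * (1 - (-γ / 2) * (γ / 2)) := by
  have hden : (0:ℝ) < 4 + γ ^ 2 := by positivity
  constructor
  · intro ρ x hρ1 hρ2 hx1 hx2 hγx
    have hA : (0:ℝ) ≤ 1 - ρ * x := by nlinarith [mul_nonneg (by linarith : (0:ℝ) ≤ 1 - ρ) (by linarith : (0:ℝ) ≤ 1 + x), mul_nonneg (by linarith : (0:ℝ) ≤ 1 + ρ) (by linarith : (0:ℝ) ≤ 1 - x)]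
    have hc : (0:ℝ) ≤ (4 - γ ^ 2) / (4 + γ ^ 2) := by
      apply div_nonneg _ hden.le; nlinarith
    have hRHS : (0:ℝ) ≤ (4 - γ ^ 2) / (4 + γ ^ 2) * (1 - ρ * x) := mul_nonneg hc hA
    have hkey : (1 - ρ ^ 2) * (1 - x ^ 2) ≤ ((4 - γ ^ 2) / (4 + γ ^ 2) * (1 - ρ * x)) ^ 2 := by
      rw [mul_pow, div_pow, div_mul_eq_mul_div, le_div_iff₀ (by positivity)]
      have h16 : 16 * γ ^ 2 * (1 - ρ * x) ^ 2 ≤ γ ^ 2 * (4 + (x - ρ) ^ 2) ^ 2 := by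
        nlinarith [mul_nonneg (mul_nonneg (sq_nonneg γ) (sq_nonneg (x + ρ)))
          (by nlinarith [sq_nonneg (x - ρ), sq_nonneg (x + ρ)] :
            (0:ℝ) ≤ 2 * (4 + (x - ρ) ^ 2) - (x + ρ) ^ 2)]
      have h2 : γ ^ 2 * (4 + (x - ρ) ^ 2) ^ 2 ≤ (4 + γ ^ 2) ^ 2 * (x - ρ) ^ 2 := by
        nlinarith [mul_nonneg (mul_nonneg (by linarith : (0:ℝ) ≤ x - ρ - γ)
            (by nlinarith : (0:ℝ) ≤ 4 - γ * (x - ρ)))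
          (by nlinarith [sq_nonneg (x - ρ)] :
            (0:ℝ) ≤ (x - ρ) * (4 + γ ^ 2) + γ * (4 + (x - ρ) ^ 2))]
      nlinarith [h16, h2]
    calc Real.sqrt ((1 - ρ ^ 2) * (1 - x ^ 2))
        ≤ Real.sqrt (((4 - γ ^ 2) / (4 + γ ^ 2) * (1 - ρ * x)) ^ 2) := Real.sqrt_le_sqrt hkey
      _ = (4 - γ ^ 2) / (4 + γ ^ 2) * (1 - ρ * x) := Real.sqrt_sq hRHS
  · have h : (1 - (-γ / 2) ^ 2) * (1 - (γ / 2) ^ 2) = ((4 - γ ^ 2) / 4) ^ 2 := by ring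
    rw [h, Real.sqrt_sq (by nlinarith)]
    field_simp
    ring
end

section
/- Let G = (V, E) be a finite directed acyclic graph and let i, j ∈ V be distinct nodes. Suppose Z ⊆ V \ {i, j} d-separates i and j. Let W ⊆ V \ {i, j} be any set of nodes such that no element of W is a collider on any (undirected) path between i and j in G, and no element of W is a descendant of a collider on any path between i and j. Then Z ∪ W also d-separates i and j. -/
/-- `p` is an (undirected) path in the directed graph `E`: a list of distinct
nodes in which each consecutive pair is joined by a directed edge in either
orientation. -/
def IsTrail {V : Type*} (E : V → V → Prop) (p : List V) : Prop :=
  p.Chain' (fun a b => E a b ∨ E b a) ∧ p.Nodup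

/-- `p` is a path between `i` and `j`. -/
def IsPathBetween {V : Type*} (E : V → V → Prop) (i j : V) (p : List V) : Prop :=
  IsTrail E p ∧ p.head? = some i ∧ p.getLast? = some j

/-- `m` is an interior node of the path `p` (it has a neighbour on each side). -/
def IsInteriorOn {V : Type*} (p : List V) (m : V) : Prop :=
  ∃ a b : V, [a, m, b] <:+: p

/-- `m` is a collider on the path `p`: both adjacent path edges point into `m`. -/
def IsColliderOn {V : Type*} (E : V → V → Prop) (p : List V) (m : V) : Prop :=
  ∃ a b : V, [a, m, b] <:+: p ∧ E a m ∧ E b m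

/-- The set `Z` blocks the path `p`: either `p` contains a non-collider interior
node belonging to `Z`, or `p` contains a collider such that neither the collider
nor any of its descendants belongs to `Z`. -/
def Blocks {V : Type*} (E : V → V → Prop) (Z : Set V) (p : List V) : Prop :=
  (∃ m : V, IsInteriorOn p m ∧ ¬IsColliderOn E p m ∧ m ∈ Z) ∨
  (∃ m : V, IsColliderOn E p m ∧ m ∉ Z ∧ ∀ w : V, Relation.TransGen E m w → w ∉ Z)

/-- `Z` d-separates `i` and `j`: every path between `i` and `j` is blocked by `Z`. -/
def DSeparates {V : Type*} (E : V → V → Prop) (i j : V) (Z : Set V) : Prop :=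
  ∀ p : List V, IsPathBetween E i j p → Blocks E Z p

/-- Proposition 1 (Step 2, Rule 2-1): in a finite DAG, if `Z ⊆ V \ {i,j}`
d-separates `i` and `j`, and `W ⊆ V \ {i,j}` contains no collider on any path
between `i` and `j` and no descendant of such a collider, then `Z ∪ W` also
d-separates `i` and `j`. -/
theorem dsep_union_noncollider {V : Type*} [Fintype V] (E : V → V → Prop)
    (hacyclic : ∀ v : V, ¬Relation.TransGen E v v)
    (i j : V) (hij : i ≠ j) (Z W : Set V)
    (hZ : Z ⊆ {i, j}ᶜ) (hW : W ⊆ {i, j}ᶜ)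
    (hsep : DSeparates E i j Z)
    (hW_nocol : ∀ w ∈ W, ∀ p : List V, IsPathBetween E i j p → ¬IsColliderOn E p w)
    (hW_nodesc : ∀ w ∈ W, ∀ p : List V, IsPathBetween E i j p →
      ∀ c : V, IsColliderOn E p c → ¬Relation.TransGen E c w) :
    DSeparates E i j (Z ∪ W) := by
  intro p hp
  rcases hsep p hp with ⟨m, hm⟩ | ⟨m, hcol, hmZ, hdesc⟩
  · exact Or.inl ⟨m, hm.1, hm.2.1, Or.inl hm.2.2⟩
  · refine Or.inr ⟨m, hcol, ?_, ?_⟩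
    · rintro (h | h)
      · exact hmZ h
      · exact hW_nocol m h p hp hcol
    · rintro w hw (h | h)
      · exact hdesc w hw h
      · exact hW_nodesc w h p hp m hcol hw
end
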